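/- Let p > 3 be a prime. Define T(p) as the number-weighted sum ∑ over u, a, b ∈ F_p^× with (a-1)²(u·ā-1)(u·b-1) ≡ (b-1)²(u·b̄-1)(u·a-1) mod p of χ₀((a-1)²(u·ā-1)(u·b-1)), i.e., the count of triples where additionally the common value is nonzero mod p. Then T(p) = (p-5)(2p-5) - (2|p) + ∑' (Δ(a,b) | p), where Δ(a,b) = (1 - a²b²)² + 4ab(a+b-2)(a+b-2ab) and the sum ∑' runs over pairs a, b ∈ F_p^× with a ≢ b and a + b - 2ab ≢ 0 mod p. -/

import Mathlib

open Finset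

/-- `T(p)`: the number of triples `(u,a,b)` of nonzero residues mod `p` with
`(a-1)²(uā-1)(ub-1) ≡ (b-1)²(ub̄-1)(ua-1)` and the common value nonzero mod `p`. -/
def T (p : ℕ) [Fact p.Prime] : ℤ :=
  ∑ u ∈ univ.filter (fun u : ZMod p => u ≠ 0),
    ∑ a ∈ univ.filter (fun a : ZMod p => a ≠ 0),
      ∑ b ∈ univ.filter (fun b : ZMod p => b ≠ 0),
        if (a - 1) ^ 2 * (u * a⁻¹ - 1) * (u * b - 1)
              = (b - 1) ^ 2 * (u * b⁻¹ - 1) * (u * a - 1)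
            ∧ (a - 1) ^ 2 * (u * a⁻¹ - 1) * (u * b - 1) ≠ 0
        then 1 else 0

/-!
Multiplying the congruence by `ab` turns it into `(a - b) · Q(u) = 0`, where `Q = quad a b` is a
polynomial in `u` with leading coefficient `-(a + b - 2ab)` and discriminant `Δ(a,b)`; the common
value vanishes exactly when `a = 1`, `u = a` or `ub = 1`. A diagonal pair `a = b ≠ 1` therefore
contributes `p - #{0, a, a⁻¹}`. An off-diagonal pair with `a + b ≠ 2ab` contributes the
`1 + (Δ(a,b) | p)` roots of `Q` minus its roots among `u = 0, a, b⁻¹`, which only exist on the lines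
`a + b = 2`, `a = -1`, `b = -1`, or when `a = 1` or `b = 1` (then `Δ` is a nonzero square and no
`u` is admissible). On the hyperbola `a + b = 2ab` the polynomial `Q` is linear, with one admissible
root unless `a = -1`, `b = -1` or `ab = -1`; the hyperbola meets `ab = -1` in the `1 + (2 | p)`
roots of `a² + 2a - 1`. Counting the exceptional pairs gives `(p - 5)(2p - 5) - (2 | p)`.
-/

namespace TripleCount

lemma natCast_card_compl {α : Type*} [Fintype α] [DecidableEq α] (s : Finset α) :
    (#sᶜ : ℤ) = Fintype.card α - #s := by
  rw [card_compl, Nat.cast_sub (card_le_univ s)]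

lemma card_filter_fst_eq {α β : Type*} [Fintype α] [Fintype β] [DecidableEq α] [DecidableEq β]
    (c : α) (s : Finset β) : #{x : α × β | x.1 = c ∧ x.2 ∈ s} = #s := by
  calc _ = #(({c} : Finset α) ×ˢ s) := by congr 1; ext ⟨a, b⟩; simp [and_comm, eq_comm]
    _ = #s := by simp

lemma card_filter_snd_eq {α β : Type*} [Fintype α] [Fintype β] [DecidableEq α] [DecidableEq β]
    (f : α → β) (s : Finset α) : #{x : α × β | x.2 = f x.1 ∧ x.1 ∈ s} = #s := by
  rw [← card_image_of_injective s (f := fun a => (a, f a)) fun _ _ h => congrArg Prod.fst h]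
  congr 1; ext ⟨a, b⟩; simp [eq_comm, and_comm]

lemma card_filter_eq_and_or_eq_and {α : Type*} [Fintype α] [DecidableEq α] {x y : α}
    (hxy : x ≠ y) (P Q : Prop) [Decidable P] [Decidable Q] :
    (#{u | (u = x ∧ P) ∨ (u = y ∧ Q)} : ℤ) = (if P then 1 else 0) + (if Q then 1 else 0) := by
  by_cases hP : P <;> by_cases hQ : Q <;> simp [hP, hQ, filter_or, filter_eq', card_pair hxy]

section Field

variable {F : Type*} [Field F]

lemma four_ne_zero_of_ringChar_ne_two (hF : ringChar F ≠ 2) : (4 : F) ≠ 0 := by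
  simpa [show (4 : F) = 2 * 2 by norm_num] using Ring.two_ne_zero hF

def quad (a b u : F) : F :=
  -(a + b - 2 * a * b) * u ^ 2 + (1 - a ^ 2 * b ^ 2) * u + a * b * (a + b - 2)

def disc (a b : F) : F :=
  (1 - a ^ 2 * b ^ 2) ^ 2 + 4 * a * b * (a + b - 2) * (a + b - 2 * a * b)

lemma discrim_quad (a b : F) :
    discrim (-(a + b - 2 * a * b)) (1 - a ^ 2 * b ^ 2) (a * b * (a + b - 2)) = disc a b := by
  unfold discrim disc; ring

lemma mul_sub_eq_quad {a b : F} (ha : a ≠ 0) (hb : b ≠ 0) (u : F) :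
    a * b * ((a - 1) ^ 2 * (u * a⁻¹ - 1) * (u * b - 1)
      - (b - 1) ^ 2 * (u * b⁻¹ - 1) * (u * a - 1)) = (a - b) * quad a b u := by
  unfold quad; field_simp; ring

lemma mul_lhs_eq {a : F} (ha : a ≠ 0) (b u : F) :
    a * ((a - 1) ^ 2 * (u * a⁻¹ - 1) * (u * b - 1)) = (a - 1) ^ 2 * (u - a) * (u * b - 1) := by
  field_simp

lemma quad_of_linear {a b : F} (hL : a + b - 2 * a * b = 0) (u : F) :
    quad a b u = (1 - a * b) * ((1 + a * b) * u - 2 * a * b) := by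
  unfold quad; linear_combination (a * b - u ^ 2) * hL

lemma quad_eq_zero_and_excluded_iff {a b u : F} (ha : a ≠ 0) (hb : b ≠ 0) (ha1 : a ≠ 1)
    (hb1 : b ≠ 1) :
    quad a b u = 0 ∧ (u = 0 ∨ u = a ∨ u * b = 1) ↔
      (u = 0 ∧ a + b = 2) ∨ (u = -1 ∧ (a = -1 ∨ b = -1)) := by
  constructor
  · rintro ⟨hq, rfl | hua | hub⟩
    · have : a * b * (a + b - 2) = 0 := by unfold quad at hq; linear_combination hq
      exact Or.inl ⟨rfl, by linear_combination (mul_eq_zero_iff_left (mul_ne_zero ha hb)).1 this⟩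
    · have : a * (1 - b) ^ 2 * (1 - a) * (1 + a) = 0 := by
        unfold quad at hq; rw [hua] at hq; linear_combination hq
      have ham : a = -1 := by
        linear_combination (mul_eq_zero_iff_left (mul_ne_zero (mul_ne_zero ha
          (pow_ne_zero 2 (sub_ne_zero.2 hb1.symm))) (sub_ne_zero.2 ha1.symm))).1 this
      exact Or.inr ⟨hua.trans ham, Or.inl ham⟩
    · have : a * (b - 1) ^ 3 * b * (b + 1) = 0 := by
        unfold quad at hq
        linear_combination b ^ 3 * hq
          + ((a + b - 2 * a * b) * b ^ 2 * u + a * b * (1 - 2 * b + a * b ^ 3)) * hub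
      have hbm : b = -1 := by
        linear_combination (mul_eq_zero_iff_left (mul_ne_zero (mul_ne_zero ha
          (pow_ne_zero 3 (sub_ne_zero.2 hb1))) hb)).1 this
      exact Or.inr ⟨by linear_combination -hub + u * hbm, Or.inr hbm⟩
  · rintro (⟨rfl, h⟩ | ⟨rfl, rfl | rfl⟩)
    · exact ⟨by unfold quad; linear_combination a * b * h, Or.inl rfl⟩
    · exact ⟨by unfold quad; ring, Or.inr (Or.inl rfl)⟩
    · exact ⟨by unfold quad; ring, Or.inr (Or.inr (by ring))⟩

end Field

variable {F : Type*} [Field F] [Fintype F] [DecidableEq F]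

lemma natCast_card_quadratic_roots (hF : ringChar F ≠ 2) {A : F} (hA : A ≠ 0) (B C : F) :
    (#{u | A * u ^ 2 + B * u + C = 0} : ℤ) = quadraticChar F (discrim A B C) + 1 := by
  have : NeZero (2 : F) := ⟨Ring.two_ne_zero hF⟩
  let e : F ≃ F :=
    (Equiv.mulLeft₀ (2 * A) (mul_ne_zero two_ne_zero hA)).trans (Equiv.addRight B)
  rw [← quadraticChar_card_sqrts hF, Set.toFinset_ofPred]
  congr 1
  exact card_equiv e fun u => by simp [e, sq, quadratic_eq_zero_iff_discrim_eq_sq hA, eq_comm]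

lemma natCast_card_filter_ne_zero : (#({a | a ≠ 0} : Finset F) : ℤ) = Fintype.card F - 1 := by
  rw [filter_ne', card_erase_of_mem (mem_univ _), card_univ, Nat.cast_sub Fintype.card_pos]
  rfl

def solutions (a b : F) : Finset F :=
  {u | u ≠ 0 ∧ a ≠ 1 ∧ u ≠ a ∧ u * b ≠ 1 ∧ (a - b) * quad a b u = 0}

lemma filter_eq_solutions {a b : F} (ha : a ≠ 0) (hb : b ≠ 0) :
    ({u | u ≠ 0 ∧ ((a - 1) ^ 2 * (u * a⁻¹ - 1) * (u * b - 1)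
        = (b - 1) ^ 2 * (u * b⁻¹ - 1) * (u * a - 1)
      ∧ (a - 1) ^ 2 * (u * a⁻¹ - 1) * (u * b - 1) ≠ 0)} : Finset F) = solutions a b := by
  refine filter_congr fun u _ => ?_
  have hE : (a - 1) ^ 2 * (u * a⁻¹ - 1) * (u * b - 1) = (b - 1) ^ 2 * (u * b⁻¹ - 1) * (u * a - 1)
      ↔ (a - b) * quad a b u = 0 := by
    rw [← mul_sub_eq_quad ha hb, mul_eq_zero_iff_left (mul_ne_zero ha hb), sub_eq_zero]
  have hV : (a - 1) ^ 2 * (u * a⁻¹ - 1) * (u * b - 1) = 0 ↔ a = 1 ∨ u = a ∨ u * b = 1 := by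
    rw [← mul_eq_zero_iff_left ha, mul_lhs_eq ha]
    simp [sub_eq_zero, or_assoc]
  simp only [hE, ne_eq, hV]
  tauto

lemma natCast_card_solutions_self {a : F} (ha : a ≠ 0) :
    (#(solutions a a) : ℤ) = if a = 1 then 0
      else if a = -1 then (Fintype.card F : ℤ) - 2 else (Fintype.card F : ℤ) - 3 := by
  split_ifs with ha1 ham
  · simp [solutions, ha1]
  all_goals
    rw [show solutions a a = ({0, a, a⁻¹} : Finset F)ᶜ by
      ext u; simp [solutions, ha1, mul_eq_one_iff_eq_inv₀ ha], natCast_card_compl]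
  · simp [ham, card_pair (show (0 : F) ≠ -1 by simp)]
  · have hainv : a ≠ a⁻¹ := by simp [self_eq_inv₀, ha, ha1, ham]
    rw [card_eq_three.2 ⟨0, a, a⁻¹, ha.symm, (inv_ne_zero ha).symm, hainv, rfl⟩]
    norm_num

lemma sum_card_solutions_self (hF : ringChar F ≠ 2) :
    ∑ a ∈ ({a | a ≠ 0} : Finset F), (#(solutions a a) : ℤ) =
      (Fintype.card F - 2) * (Fintype.card F - 3) + 1 := by
  have hm1 := Ring.neg_one_ne_one_of_char_ne_two hF
  have hpt : ∀ a ∈ ({a | a ≠ 0} : Finset F), (#(solutions a a) : ℤ) = (Fintype.card F - 3)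
      + (if a = 1 then 3 - (Fintype.card F : ℤ) else 0) + (if a = -1 then 1 else 0) := by
    intro a ha
    rw [natCast_card_solutions_self (by simpa using ha)]
    by_cases ha1 : a = 1
    · simp [ha1, hm1.symm]
    · by_cases ham : a = -1
      · simp only [ham, hm1, ↓reduceIte, add_zero]; ring
      · simp [ha1, ham]
  rw [sum_congr rfl hpt, sum_add_distrib, sum_add_distrib, sum_const, sum_ite_eq', sum_ite_eq',
    if_pos (by simp), if_pos (by simp), nsmul_eq_mul, natCast_card_filter_ne_zero]
  ring

lemma solutions_one_left (b : F) : solutions 1 b = ∅ := by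
  simp [solutions]

lemma solutions_one_right (a : F) : solutions a 1 = ∅ := by
  refine filter_false_of_mem fun u _ ⟨_, ha1, hua, hu1, hq⟩ => ?_
  have : (a - 1) ^ 2 * (u - 1) * (u - a) = 0 := by unfold quad at hq; linear_combination hq
  simp_all [sub_eq_zero]

lemma mem_solutions_of_linear {a b : F} (hab : a ≠ b) (hL : a + b - 2 * a * b = 0) (u : F) :
    u ∈ solutions a b ↔ u ≠ 0 ∧ u ≠ a ∧ u * b ≠ 1 ∧ (1 + a * b) * u = 2 * a * b := by
  have ha1 : a ≠ 1 := by rintro rfl; exact hab (by linear_combination hL)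
  have hb1 : b ≠ 1 := by rintro rfl; exact hab (by linear_combination -hL)
  have hab1 : 1 - a * b ≠ 0 := fun h => by
    have : (a - 1) * (b - 1) = 0 := by linear_combination h - hL
    exact mul_ne_zero (sub_ne_zero.2 ha1) (sub_ne_zero.2 hb1) this
  have : (a - b) * quad a b u = 0 ↔ (1 + a * b) * u = 2 * a * b := by
    rw [quad_of_linear hL, ← mul_assoc,
      mul_eq_zero_iff_left (mul_ne_zero (sub_ne_zero.2 hab) hab1), sub_eq_zero]
  simp only [solutions, mem_filter, mem_univ, true_and, this, ne_eq, ha1, not_false_eq_true]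

lemma natCast_card_solutions_of_linear (hF : ringChar F ≠ 2) {a b : F} (ha : a ≠ 0) (hb : b ≠ 0)
    (hab : a ≠ b) (hL : a + b - 2 * a * b = 0) :
    (#(solutions a b) : ℤ) = if a ≠ -1 ∧ b ≠ -1 ∧ a * b ≠ -1 then 1 else 0 := by
  have h2 := Ring.two_ne_zero hF
  have ha1 : a ≠ 1 := by rintro rfl; exact hab (by linear_combination hL)
  have hb1 : b ≠ 1 := by rintro rfl; exact hab (by linear_combination -hL)
  split_ifs with hgood
  · obtain ⟨ham, hbm, habm⟩ := hgood
    have h1 : 1 + a * b ≠ 0 := fun h => habm (by linear_combination h)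
    obtain ⟨u₀, hu₀⟩ : ∃ u₀, (1 + a * b) * u₀ = 2 * a * b :=
      ⟨2 * a * b / (1 + a * b), mul_div_cancel₀ _ h1⟩
    rw [show solutions a b = {u₀} from ?_, card_singleton, Nat.cast_one]
    ext u
    rw [mem_solutions_of_linear hab hL, mem_singleton]
    refine ⟨fun ⟨_, _, _, hu⟩ => mul_left_cancel₀ h1 (hu.trans hu₀.symm), ?_⟩
    rintro rfl
    refine ⟨?_, ?_, ?_, hu₀⟩
    · rintro rfl
      exact mul_ne_zero (mul_ne_zero h2 ha) hb (by linear_combination -hu₀)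
    · rintro rfl
      have : b * (u - 1) * (u + 1) = 0 := by linear_combination hu₀ - hL
      exact mul_ne_zero (mul_ne_zero hb (sub_ne_zero.2 ha1))
        (fun h => ham (eq_neg_of_add_eq_zero_left h)) this
    · intro h
      have : (b - 1) * (b + 1) = 0 := by linear_combination b * hL - b * hu₀ + (1 + a * b) * h
      exact mul_ne_zero (sub_ne_zero.2 hb1) (fun h => hbm (eq_neg_of_add_eq_zero_left h)) this
  · simp only [ne_eq, not_and_or, not_not] at hgood
    rw [Nat.cast_eq_zero, card_eq_zero, eq_empty_iff_forall_notMem]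
    intro u hu
    obtain ⟨-, hua, hub, hu⟩ := (mem_solutions_of_linear hab hL u).1 hu
    rcases hgood with rfl | rfl | hm
    · have : (1 - b) * (u + 1) = 0 := by linear_combination hu - hL
      exact hua (eq_neg_of_add_eq_zero_left
        ((mul_eq_zero_iff_left (sub_ne_zero.2 hb1.symm)).1 this))
    · have : (1 - a) * (u + 1) = 0 := by linear_combination hu - hL
      exact hub (by linear_combination -(mul_eq_zero_iff_left (sub_ne_zero.2 ha1.symm)).1 this)
    · exact h2 (by linear_combination hu - (u - 2) * hm)

lemma natCast_card_solutions_of_quadratic (hF : ringChar F ≠ 2) {a b : F} (ha : a ≠ 0)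
    (hb : b ≠ 0) (ha1 : a ≠ 1) (hb1 : b ≠ 1) (hab : a ≠ b) (hL : a + b - 2 * a * b ≠ 0) :
    (#(solutions a b) : ℤ) = quadraticChar F (disc a b) + 1
      - (if a + b = 2 then 1 else 0) - (if a = -1 then 1 else 0) - (if b = -1 then 1 else 0) := by
  have hroots : (#{u | quad a b u = 0} : ℤ) = quadraticChar F (disc a b) + 1 := by
    rw [← discrim_quad]
    exact natCast_card_quadratic_roots hF (neg_ne_zero.2 hL) _ _
  have hexcluded : (#{u | quad a b u = 0 ∧ (u = 0 ∨ u = a ∨ u * b = 1)} : ℤ) =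
      (if a + b = 2 then 1 else 0) + (if a = -1 then 1 else 0) + (if b = -1 then 1 else 0) := by
    rw [filter_congr fun u _ => quad_eq_zero_and_excluded_iff ha hb ha1 hb1,
      card_filter_eq_and_or_eq_and (by simp)]
    by_cases ham : a = -1 <;> by_cases hbm : b = -1
    · exact absurd (ham.trans hbm.symm) hab
    all_goals simp [ham, hbm]
  have hsplit := card_filter_add_card_filter_not (s := ({u | quad a b u = 0} : Finset F))
    (p := fun u => u = 0 ∨ u = a ∨ u * b = 1)
  rw [filter_filter, filter_filter,
    show ({u | quad a b u = 0 ∧ ¬(u = 0 ∨ u = a ∨ u * b = 1)} : Finset F) = solutions a b from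
      filter_congr fun u _ => by
        simp only [mul_eq_zero_iff_left (sub_ne_zero.2 hab), ha1, ne_eq, not_false_eq_true]
        tauto] at hsplit
  zify at hsplit
  linarith

variable (F) in
def linearPairs : Finset (F × F) :=
  ({a | a ≠ 0} : Finset F).offDiag.filter fun x => x.1 + x.2 - 2 * x.1 * x.2 = 0

variable (F) in
def quadraticPairs : Finset (F × F) :=
  ({a | a ≠ 0} : Finset F).offDiag.filter fun x => x.1 + x.2 - 2 * x.1 * x.2 ≠ 0

lemma mem_linearPairs {x : F × F} :
    x ∈ linearPairs F ↔ x.1 ≠ 0 ∧ x.2 ≠ 0 ∧ x.1 ≠ x.2 ∧ x.1 + x.2 - 2 * x.1 * x.2 = 0 := by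
  simp [linearPairs, and_assoc]

lemma mem_quadraticPairs {x : F × F} :
    x ∈ quadraticPairs F ↔ x.1 ≠ 0 ∧ x.2 ≠ 0 ∧ x.1 ≠ x.2 ∧ x.1 + x.2 - 2 * x.1 * x.2 ≠ 0 := by
  simp [quadraticPairs, and_assoc]

lemma linearPairs_eq (hF : ringChar F ≠ 2) :
    linearPairs F =
      ({x | x.2 = x.1 / (2 * x.1 - 1) ∧ x.1 ∈ ({0, 1, 2⁻¹} : Finset F)ᶜ} : Finset (F × F)) := by
  have h2 := Ring.two_ne_zero hF
  ext ⟨a, b⟩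
  simp only [mem_filter, mem_univ, true_and, mem_linearPairs, ne_eq, compl_insert, mem_erase,
    mem_compl, mem_singleton]
  grind

lemma natCast_card_linearPairs (hF : ringChar F ≠ 2) :
    (#(linearPairs F) : ℤ) = Fintype.card F - 3 := by
  have h2 := Ring.two_ne_zero hF
  rw [linearPairs_eq hF, card_filter_snd_eq (fun a => a / (2 * a - 1)), natCast_card_compl]
  repeat rw [card_insert_of_notMem (by simp only [mem_insert, mem_singleton]; grind)]
  rfl

lemma sum_card_solutions_linearPairs (hF : ringChar F ≠ 2) (h3 : (3 : F) ≠ 0) :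
    ∑ x ∈ linearPairs F, (#(solutions x.1 x.2) : ℤ) = Fintype.card F - 6 - quadraticChar F 2 := by
  have h2 := Ring.two_ne_zero hF
  have h4 := four_ne_zero_of_ringChar_ne_two hF
  have hroots : (#{a : F | a ^ 2 + 2 * a - 1 = 0} : ℤ) = quadraticChar F 2 + 1 := by
    have := natCast_card_quadratic_roots hF one_ne_zero (2 : F) (-1)
    rw [show discrim 1 2 (-1 : F) = 2 ^ 2 * 2 by unfold discrim; ring, map_mul,
      quadraticChar_sq_one' h2, one_mul] at this
    simpa [sub_eq_add_neg] using this
  -- On the hyperbola `b = a / (2a - 1)`: `b = -1` iff `a = 3⁻¹`, and `ab = -1` iff `a² + 2a = 1`.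
  have hset : (linearPairs F).filter (fun x => x.1 ≠ -1 ∧ x.2 ≠ -1 ∧ x.1 * x.2 ≠ -1) =
      ({x | x.2 = x.1 / (2 * x.1 - 1) ∧
        x.1 ∈ (({a | a ^ 2 + 2 * a - 1 = 0} : Finset F) ∪ {0, 1, 2⁻¹, -1, 3⁻¹})ᶜ} :
          Finset (F × F)) := by
    ext ⟨a, b⟩
    simp only [mem_filter, mem_univ, true_and, mem_linearPairs, ne_eq, union_insert,
      union_singleton, compl_insert, compl_filter, mem_erase]
    grind
  have hdisj : Disjoint ({a | a ^ 2 + 2 * a - 1 = 0} : Finset F) {0, 1, 2⁻¹, -1, 3⁻¹} := by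
    simp only [disjoint_left, mem_filter, mem_univ, true_and, mem_insert, mem_singleton, not_or]
    grind
  rw [sum_congr rfl fun x hx => by
      obtain ⟨ha, hb, hab, hL⟩ := mem_linearPairs.1 hx
      exact natCast_card_solutions_of_linear hF ha hb hab hL,
    sum_boole, hset, card_filter_snd_eq (fun a => a / (2 * a - 1)), natCast_card_compl,
    card_union_of_disjoint hdisj]
  repeat rw [card_insert_of_notMem (by simp only [mem_insert, mem_singleton]; grind)]
  push_cast [card_singleton, hroots]
  ring

lemma natCast_card_solutions_of_mem_quadraticPairs (hF : ringChar F ≠ 2) {x : F × F}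
    (hx : x ∈ quadraticPairs F) :
    (#(solutions x.1 x.2) : ℤ) = quadraticChar F (disc x.1 x.2) +
      if x.1 = 1 ∨ x.2 = 1 then -1 else 1 - (if x.1 + x.2 = 2 then 1 else 0)
        - (if x.1 = -1 then 1 else 0) - (if x.2 = -1 then 1 else 0) := by
  obtain ⟨a, b⟩ := x
  obtain ⟨ha, hb, hab, hL⟩ := mem_quadraticPairs.1 hx
  dsimp only at ha hb hab hL ⊢
  by_cases h1 : a = 1 ∨ b = 1
  · rw [if_pos h1]
    rcases h1 with rfl | rfl
    · rw [solutions_one_left, show disc 1 b = ((b - 1) ^ 2) ^ 2 by unfold disc; ring,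
        quadraticChar_sq_one' (pow_ne_zero 2 (sub_ne_zero.2 (Ne.symm hab)))]
      norm_num
    · rw [solutions_one_right, show disc a 1 = ((a - 1) ^ 2) ^ 2 by unfold disc; ring,
        quadraticChar_sq_one' (pow_ne_zero 2 (sub_ne_zero.2 hab))]
      norm_num
  · rw [if_neg h1, natCast_card_solutions_of_quadratic hF ha hb (by tauto) (by tauto) hab hL]
    ring

lemma natCast_card_quadraticPairs (hF : ringChar F ≠ 2) :
    (#(quadraticPairs F) : ℤ) =
      (Fintype.card F - 1) * (Fintype.card F - 2) - (Fintype.card F - 3) := by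
  have hsplit : #(linearPairs F) + #(quadraticPairs F) = #({a | a ≠ 0} : Finset F).offDiag :=
    card_filter_add_card_filter_not _
  rw [offDiag_card] at hsplit
  have := congrArg (Nat.cast : ℕ → ℤ) hsplit
  push_cast [Nat.cast_sub (Nat.le_mul_self _), natCast_card_filter_ne_zero,
    natCast_card_linearPairs hF] at this
  linear_combination this

lemma natCast_card_filter_quadraticPairs_one :
    (#((quadraticPairs F).filter fun x => x.1 = 1 ∨ x.2 = 1) : ℤ) =
      2 * (Fintype.card F - 2) := by
  have hset : (quadraticPairs F).filter (fun x => x.1 = 1 ∨ x.2 = 1) =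
      ({x | x.1 = 1 ∧ x.2 ∈ ({0, 1} : Finset F)ᶜ} : Finset (F × F)) ∪
        ({x | x.2 = (fun _ => 1) x.1 ∧ x.1 ∈ ({0, 1} : Finset F)ᶜ} : Finset (F × F)) := by
    ext ⟨a, b⟩
    simp only [mem_filter, mem_univ, true_and, mem_quadraticPairs, mem_union, ne_eq, compl_insert,
      mem_erase, mem_compl, mem_singleton]
    grind
  have hdisj : Disjoint ({x | x.1 = 1 ∧ x.2 ∈ ({0, 1} : Finset F)ᶜ} : Finset (F × F))
      ({x | x.2 = (fun _ => 1) x.1 ∧ x.1 ∈ ({0, 1} : Finset F)ᶜ} : Finset (F × F)) := by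
    simp only [disjoint_left, mem_filter, mem_univ, true_and, compl_insert, mem_erase, ne_eq,
      mem_compl, mem_singleton]
    grind
  rw [hset, card_union_of_disjoint hdisj, card_filter_fst_eq, card_filter_snd_eq (fun _ => 1)]
  push_cast [natCast_card_compl, card_pair zero_ne_one]
  ring

lemma natCast_card_filter_add_eq_two (hF : ringChar F ≠ 2) :
    (#(((quadraticPairs F).filter fun x => ¬(x.1 = 1 ∨ x.2 = 1)).filter
      fun x => x.1 + x.2 = 2) : ℤ) = Fintype.card F - 3 := by
  have h2 := Ring.two_ne_zero hF
  have hset : ((quadraticPairs F).filter fun x => ¬(x.1 = 1 ∨ x.2 = 1)).filter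
      (fun x => x.1 + x.2 = 2) =
      ({x | x.2 = (fun a => 2 - a) x.1 ∧ x.1 ∈ ({0, 1, 2} : Finset F)ᶜ} : Finset (F × F)) := by
    ext ⟨a, b⟩
    simp only [mem_filter, mem_univ, true_and, mem_quadraticPairs, ne_eq, not_or, compl_insert,
      mem_erase, mem_compl, mem_singleton]
    grind
  rw [hset, card_filter_snd_eq (fun a => 2 - a), natCast_card_compl]
  repeat rw [card_insert_of_notMem (by simp only [mem_insert, mem_singleton]; grind)]
  rfl

-- On the line `a = -1` the leading coefficient `a + b - 2ab` is `3b - 1`.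
lemma natCast_card_filter_fst_eq_neg_one (hF : ringChar F ≠ 2) (h3 : (3 : F) ≠ 0) :
    (#(((quadraticPairs F).filter fun x => ¬(x.1 = 1 ∨ x.2 = 1)).filter
      fun x => x.1 = -1) : ℤ) = Fintype.card F - 4 := by
  have h2 := Ring.two_ne_zero hF
  have h4 := four_ne_zero_of_ringChar_ne_two hF
  have hset : ((quadraticPairs F).filter fun x => ¬(x.1 = 1 ∨ x.2 = 1)).filter
      (fun x => x.1 = -1) =
      ({x | x.1 = -1 ∧ x.2 ∈ ({0, 1, -1, 3⁻¹} : Finset F)ᶜ} : Finset (F × F)) := by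
    ext ⟨a, b⟩
    simp only [mem_filter, mem_univ, true_and, mem_quadraticPairs, ne_eq, not_or, compl_insert,
      mem_erase, mem_compl, mem_singleton]
    grind
  rw [hset, card_filter_fst_eq, natCast_card_compl]
  repeat rw [card_insert_of_notMem (by simp only [mem_insert, mem_singleton]; grind)]
  rfl

lemma natCast_card_filter_snd_eq_neg_one (hF : ringChar F ≠ 2) (h3 : (3 : F) ≠ 0) :
    (#(((quadraticPairs F).filter fun x => ¬(x.1 = 1 ∨ x.2 = 1)).filter
      fun x => x.2 = -1) : ℤ) = Fintype.card F - 4 := by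
  have h2 := Ring.two_ne_zero hF
  have h4 := four_ne_zero_of_ringChar_ne_two hF
  have hset : ((quadraticPairs F).filter fun x => ¬(x.1 = 1 ∨ x.2 = 1)).filter
      (fun x => x.2 = -1) =
      ({x | x.2 = (fun _ => -1) x.1 ∧ x.1 ∈ ({0, 1, -1, 3⁻¹} : Finset F)ᶜ} :
        Finset (F × F)) := by
    ext ⟨a, b⟩
    simp only [mem_filter, mem_univ, true_and, mem_quadraticPairs, ne_eq, not_or, compl_insert,
      mem_erase, mem_compl, mem_singleton]
    grind
  rw [hset, card_filter_snd_eq (fun _ => -1), natCast_card_compl]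
  repeat rw [card_insert_of_notMem (by simp only [mem_insert, mem_singleton]; grind)]
  rfl

lemma sum_card_solutions_quadraticPairs (hF : ringChar F ≠ 2) (h3 : (3 : F) ≠ 0) :
    ∑ x ∈ quadraticPairs F, (#(solutions x.1 x.2) : ℤ) =
      ∑ x ∈ quadraticPairs F, quadraticChar F (disc x.1 x.2)
        + (Fintype.card F - 3) * (Fintype.card F - 8) := by
  have hsplit := card_filter_add_card_filter_not (s := quadraticPairs F)
    (fun x => x.1 = 1 ∨ x.2 = 1)
  rw [sum_congr rfl fun x hx => natCast_card_solutions_of_mem_quadraticPairs hF hx,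
    sum_add_distrib, sum_ite, sum_const, sum_sub_distrib, sum_sub_distrib, sum_sub_distrib,
    sum_const, sum_boole, sum_boole, sum_boole, natCast_card_filter_add_eq_two hF,
    natCast_card_filter_fst_eq_neg_one hF h3, natCast_card_filter_snd_eq_neg_one hF h3]
  zify at hsplit
  push_cast [nsmul_eq_mul]
  linear_combination hsplit + natCast_card_quadraticPairs hF
    - 2 * natCast_card_filter_quadraticPairs_one (F := F)

theorem sum_sum_card_solutions (hF : ringChar F ≠ 2) (h3 : (3 : F) ≠ 0) :
    ∑ a ∈ ({a | a ≠ 0} : Finset F), ∑ b ∈ ({b | b ≠ 0} : Finset F), (#(solutions a b) : ℤ) =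
      (Fintype.card F - 5) * (2 * Fintype.card F - 5) - quadraticChar F 2
        + ∑ x ∈ quadraticPairs F, quadraticChar F (disc x.1 x.2) := by
  have hdiag : ∑ x ∈ ({a | a ≠ 0} : Finset F).diag, (#(solutions x.1 x.2) : ℤ) =
      ∑ a ∈ ({a | a ≠ 0} : Finset F), (#(solutions a a) : ℤ) := sum_map _ _ _
  have hoffDiag : ∑ x ∈ ({a | a ≠ 0} : Finset F).offDiag, (#(solutions x.1 x.2) : ℤ) =
      ∑ x ∈ linearPairs F, (#(solutions x.1 x.2) : ℤ) +
        ∑ x ∈ quadraticPairs F, (#(solutions x.1 x.2) : ℤ) :=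
    (sum_filter_add_sum_filter_not _ _ _).symm
  rw [← sum_product', ← diag_union_offDiag, sum_union (disjoint_diag_offDiag _), hdiag, hoffDiag,
    sum_card_solutions_self hF, sum_card_solutions_linearPairs hF h3,
    sum_card_solutions_quadraticPairs hF h3]
  ring

lemma sum_quadraticPairs {M : Type*} [AddCommMonoid M] (g : F × F → M) :
    ∑ x ∈ quadraticPairs F, g x = ∑ a ∈ ({a | a ≠ 0} : Finset F),
      ∑ b ∈ ({b | b ≠ 0 ∧ a ≠ b ∧ a + b - 2 * a * b ≠ 0} : Finset F), g (a, b) := by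
  rw [show quadraticPairs F = (({a | a ≠ 0} : Finset F) ×ˢ ({b | b ≠ 0} : Finset F)).filter
      (fun x => x.1 ≠ x.2 ∧ x.1 + x.2 - 2 * x.1 * x.2 ≠ 0) by
      ext; simp [quadraticPairs, and_assoc],
    sum_filter, sum_product]
  refine sum_congr rfl fun a _ => ?_
  rw [← sum_filter, filter_filter]

lemma T_eq_sum_sum_card_solutions (p : ℕ) [Fact p.Prime] :
    T p = ∑ a ∈ ({a | a ≠ 0} : Finset (ZMod p)), ∑ b ∈ ({b | b ≠ 0} : Finset (ZMod p)),
      (#(solutions a b) : ℤ) := by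
  rw [T, sum_comm]
  refine sum_congr rfl fun a ha => ?_
  rw [sum_comm]
  refine sum_congr rfl fun b hb => ?_
  rw [sum_boole, filter_filter, filter_eq_solutions (by simpa using ha) (by simpa using hb)]

end TripleCount

open TripleCount

theorem stmt_15 (p : ℕ) [Fact p.Prime] (hp : 3 < p) :
    T p = ((p : ℤ) - 5) * (2 * p - 5) - legendreSym p 2
        + ∑ a ∈ univ.filter (fun a : ZMod p => a ≠ 0),
            ∑ b ∈ univ.filter (fun b : ZMod p => b ≠ 0 ∧ a ≠ b ∧ a + b - 2 * a * b ≠ 0),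
              legendreSym p ((((1 - a ^ 2 * b ^ 2) ^ 2
                + 4 * a * b * (a + b - 2) * (a + b - 2 * a * b) : ZMod p)).val : ℤ) := by
  have hF : ringChar (ZMod p) ≠ 2 := by rw [ZMod.ringChar_zmod_n]; omega
  have h3 : (3 : ZMod p) ≠ 0 := by
    exact_mod_cast (ZMod.natCast_eq_zero_iff 3 p).not.2 (Nat.not_dvd_of_pos_of_lt (by norm_num) hp)
  rw [T_eq_sum_sum_card_solutions, sum_sum_card_solutions hF h3, ZMod.card, sum_quadraticPairs]
  simp [legendreSym, disc]
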